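/- arXiv:2007.13040 — 3 statements merged into one kernel-verified Lean document; each statement's English description precedes it below -/
import Mathlib

section
/- Fix a matrix W ∈ ℝ^{p×d}, a measurable activation σ: ℝ → ℝ applied entrywise, and a probability distribution T on ℝ^d with E_T[‖σ(WX)‖²] < ∞. Let Σ = E_T[σ(WX)σ(WX)ᵀ] and μ = E_T[σ(WX)], and let Σ^{†/2} denote the square root of the Moore–Penrose pseudoinverse of Σ. Let γ > 0 and define the function class F = { x ↦ φᵀσ(Wx) : φ ∈ ℝ^p, φᵀΣφ ≤ γ }. If rank(Σ) ≤ r and ‖Σ^{†/2}μ‖ ≤ B, then the expected Rademacher complexity of F on an i.i.d. sample X_1,...,X_n from T satisfies E_{X,ε}[ sup_{f∈F} (1/n)|Σ_{i=1}^n ε_i f(X_i)| ] ≤ 2·sqrt( γ·(r + B)/n ), where ε_1,...,ε_n are i.i.d. uniform random signs independent of the sample. -/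
/-!
Fix the sample and a sign pattern `s`. The signed sum is `φ ⬝ᵥ u` with `u = ∑ εᵢ σ(WXᵢ)`. When `u`
lies in the range of `Σ`, Cauchy–Schwarz in the geometry of `Σ` gives
`|φ ⬝ᵥ u| ≤ √(φᵀΣφ) ‖Σ^{†/2} u‖ ≤ √γ ‖Σ^{†/2} u‖`. Since the signs are orthonormal,
`E_ε ‖Σ^{†/2} u‖ ≤ √(E_ε ‖Σ^{†/2} u‖²) = √(∑ᵢ σ(WXᵢ)ᵀ Σ† σ(WXᵢ))`, and by Jensen the expectation
over the sample is at most `√(n tr(Σ†Σ)) = √(n rank(ΣΣ†)) ≤ √(n r)`. This yields the bound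
`√(γ r / n)`, which is below `2 √(γ (r + B) / n)`.
-/

open MeasureTheory ProbabilityTheory Matrix

namespace Matrix

variable {κ : Type*} [Fintype κ]

lemma dotProduct_self_nonneg (v : κ → ℝ) : 0 ≤ v ⬝ᵥ v := by
  simpa using dotProduct_star_self_nonneg v

lemma abs_dotProduct_le_sqrt_mul_sqrt (a b : κ → ℝ) :
    |a ⬝ᵥ b| ≤ √(a ⬝ᵥ a) * √(b ⬝ᵥ b) := by
  rw [← Real.sqrt_mul (dotProduct_self_nonneg a)]
  exact Real.abs_le_sqrt
    (by simpa [dotProduct, sq] using Finset.sum_mul_sq_le_sq_mul_sq Finset.univ a b)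

lemma IsSymm.dotProduct_mulVec_comm {A : Matrix κ κ ℝ} (hA : A.IsSymm) (x y : κ → ℝ) :
    x ⬝ᵥ A *ᵥ y = A *ᵥ x ⬝ᵥ y := by
  rw [dotProduct_mulVec, ← hA.eq, vecMul_transpose, hA.eq]

lemma dotProduct_transpose_mul_mulVec {m : Type*} [Fintype m] (A : Matrix m κ ℝ) (v : κ → ℝ) :
    v ⬝ᵥ (Aᵀ * A) *ᵥ v = A *ᵥ v ⬝ᵥ A *ᵥ v := by
  rw [← mulVec_mulVec, dotProduct_mulVec, vecMul_transpose]

lemma dotProduct_mulVec_eq_sum (M : Matrix κ κ ℝ) (v : κ → ℝ) :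
    v ⬝ᵥ M *ᵥ v = ∑ a, ∑ b, M a b * (v b * v a) := by
  simp only [dotProduct, mulVec, Finset.mul_sum]
  exact Finset.sum_congr rfl fun a _ => Finset.sum_congr rfl fun b _ => by ring

theorem trace_eq_rank_of_isIdempotentElem {K : Type*} [Field K] [DecidableEq κ]
    {Q : Matrix κ κ K} (hQ : IsIdempotentElem Q) : Q.trace = Q.rank := by
  have h : IsIdempotentElem (toLin' Q) := hQ.map toLinAlgEquiv'
  rw [← trace_toLin'_eq, ((LinearMap.isProj_range_iff_isIdempotentElem _).2 h).trace]
  rfl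

end Matrix

section RademacherSigns

variable {ι : Type*} [Fintype ι] [DecidableEq ι]

lemma sum_sign_mul_sign_of_ne {i j : ι} (hij : i ≠ j) :
    ∑ s : ι → Bool, (if s i then (1 : ℝ) else -1) * (if s j then 1 else -1) = 0 := by
  let flip : Equiv.Perm (ι → Bool) := Function.Involutive.toPerm
    (fun s => Function.update s i !(s i)) fun s => by ext k; by_cases k = i <;> simp_all
  have hflip := Equiv.sum_comp flip
    fun s : ι → Bool => (if s i then (1 : ℝ) else -1) * (if s j then 1 else -1)
  have hneg : ∀ s : ι → Bool,
      (if flip s i then (1 : ℝ) else -1) * (if flip s j then 1 else -1) =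
        -((if s i then (1 : ℝ) else -1) * (if s j then 1 else -1)) := by
    intro s
    have hi : flip s i = !s i := Function.update_self ..
    have hj : flip s j = s j := Function.update_of_ne hij.symm ..
    rw [hi, hj]
    cases s i <;> cases s j <;> simp
  simp only [hneg, Finset.sum_neg_distrib] at hflip
  linarith

lemma sum_sign_mul_sign (i j : ι) :
    ∑ s : ι → Bool, (if s i then (1 : ℝ) else -1) * (if s j then 1 else -1) =
      if i = j then 2 ^ Fintype.card ι else 0 := by
  split_ifs with hij
  · subst hij
    have hsq : ∀ s : ι → Bool, (if s i then (1 : ℝ) else -1) * (if s i then 1 else -1) = 1 :=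
      fun s => by cases s i <;> simp
    simp [hsq]
  · exact sum_sign_mul_sign_of_ne hij

variable {κ : Type*} [Fintype κ]

lemma sum_dotProduct_self_sum_sign_smul (v : ι → κ → ℝ) :
    ∑ s : ι → Bool, (∑ i, (if s i then (1 : ℝ) else -1) • v i) ⬝ᵥ
        (∑ i, (if s i then (1 : ℝ) else -1) • v i) =
      2 ^ Fintype.card ι * ∑ i, v i ⬝ᵥ v i := by
  simp only [sum_dotProduct, dotProduct_sum, smul_dotProduct, dotProduct_smul, smul_eq_mul]
  simp_rw [Finset.mul_sum, ← mul_assoc]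
  rw [Finset.sum_comm]
  refine Finset.sum_congr rfl fun i _ => ?_
  rw [Finset.sum_comm]
  simp_rw [← Finset.sum_mul, sum_sign_mul_sign]
  simp only [ite_mul, zero_mul, Finset.sum_ite_eq, Finset.mem_univ, if_true]

lemma sum_sqrt_dotProduct_self_sum_sign_smul_le (v : ι → κ → ℝ) :
    ∑ s : ι → Bool, √((∑ i, (if s i then (1 : ℝ) else -1) • v i) ⬝ᵥ
        (∑ i, (if s i then (1 : ℝ) else -1) • v i)) ≤
      2 ^ Fintype.card ι * √(∑ i, v i ⬝ᵥ v i) := by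
  have hcs := Real.sum_sqrt_mul_sqrt_le Finset.univ (f := fun _ : ι → Bool => 1)
    (g := fun s => (∑ i, (if s i then (1 : ℝ) else -1) • v i) ⬝ᵥ
      (∑ i, (if s i then (1 : ℝ) else -1) • v i))
    (fun _ => zero_le_one) (fun _ => dotProduct_self_nonneg _)
  rw [sum_dotProduct_self_sum_sign_smul] at hcs
  simp only [Real.sqrt_one, one_mul, Finset.sum_const, Finset.card_univ, Fintype.card_fun,
    Fintype.card_bool, nsmul_eq_mul, mul_one, Nat.cast_pow, Nat.cast_ofNat] at hcs
  refine hcs.trans_eq ?_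
  rw [Real.sqrt_mul (by positivity), ← mul_assoc, ← Real.sqrt_mul (by positivity),
    Real.sqrt_mul_self (by positivity)]

end RademacherSigns

section PseudoInverse

variable {κ : Type*} [Fintype κ] {Sig Pinv Sroot : Matrix κ κ ℝ}

lemma trace_mul_le_rank_of_mul_mul_eq [DecidableEq κ] (hP1 : Sig * Pinv * Sig = Sig) :
    (Pinv * Sig).trace ≤ Sig.rank := by
  have hQ : IsIdempotentElem (Sig * Pinv) := by
    rw [IsIdempotentElem, ← mul_assoc, hP1]
  rw [trace_mul_comm, trace_eq_rank_of_isIdempotentElem hQ]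
  exact_mod_cast rank_mul_le_left Sig Pinv

lemma dotProduct_mulVec_eq_of_mul_self (hS1 : Sroot.IsSymm) (hS2 : Sroot * Sroot = Pinv)
    (v : κ → ℝ) : v ⬝ᵥ Pinv *ᵥ v = Sroot *ᵥ v ⬝ᵥ Sroot *ᵥ v := by
  rw [← hS2, ← dotProduct_transpose_mul_mulVec, hS1.eq]

/-- Cauchy–Schwarz for the semi-inner product given by `Sig`, on the range of `Sig`. -/
lemma abs_dotProduct_le_of_mulVec_eq (hSig : Sig.IsSymm) (hP1 : Sig * Pinv * Sig = Sig)
    (hS1 : Sroot.IsSymm) (hS2 : Sroot * Sroot = Pinv) {u : κ → ℝ}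
    (hu : (Sig * Pinv) *ᵥ u = u) (φ : κ → ℝ) :
    |φ ⬝ᵥ u| ≤ √(φ ⬝ᵥ Sig *ᵥ φ) * √(Sroot *ᵥ u ⬝ᵥ Sroot *ᵥ u) := by
  have hφu : φ ⬝ᵥ u = (Sroot * Sig) *ᵥ φ ⬝ᵥ Sroot *ᵥ u := by
    conv_lhs => rw [← hu, ← hS2, ← mul_assoc, ← mulVec_mulVec, dotProduct_mulVec,
      ← mulVec_transpose, transpose_mul, hS1.eq, hSig.eq]
  have hgram : (Sroot * Sig)ᵀ * (Sroot * Sig) = Sig := by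
    rw [transpose_mul, hS1.eq, hSig.eq, mul_assoc, ← mul_assoc Sroot, hS2, ← mul_assoc, hP1]
  have hcs := abs_dotProduct_le_sqrt_mul_sqrt ((Sroot * Sig) *ᵥ φ) (Sroot *ᵥ u)
  rwa [← dotProduct_transpose_mul_mulVec, hgram, ← hφu] at hcs

lemma exists_mulVec_eq_zero_dotProduct_ne_zero (hSig : Sig.IsSymm)
    (hP1 : Sig * Pinv * Sig = Sig) (hP3 : (Sig * Pinv).IsSymm) {u : κ → ℝ}
    (hu : (Sig * Pinv) *ᵥ u ≠ u) : ∃ w, Sig *ᵥ w = 0 ∧ w ⬝ᵥ u ≠ 0 := by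
  set Q := Sig * Pinv
  have hQQ : Q * Q = Q := by rw [← mul_assoc, hP1]
  have hSigQ : Sig * Q = Sig := by
    simpa only [transpose_mul, hSig.eq, hP3.eq] using congrArg transpose hP1
  refine ⟨u - Q *ᵥ u, ?_, ?_⟩
  · rw [mulVec_sub, mulVec_mulVec, hSigQ, sub_self]
  · have hQw : Q *ᵥ (u - Q *ᵥ u) = 0 := by rw [mulVec_sub, mulVec_mulVec, hQQ, sub_self]
    have hw : u - Q *ᵥ u ≠ 0 := sub_ne_zero.2 (Ne.symm hu)
    have hself : (u - Q *ᵥ u) ⬝ᵥ u = (u - Q *ᵥ u) ⬝ᵥ (u - Q *ᵥ u) := by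
      rw [dotProduct_sub _ u, hP3.dotProduct_mulVec_comm, hQw, zero_dotProduct, sub_zero]
    rwa [hself, Ne, dotProduct_self_eq_zero]

lemma not_bddAbove_abs_dotProduct {γ : ℝ} (hγ : 0 ≤ γ) {u w : κ → ℝ} (hw : Sig *ᵥ w = 0)
    (hwu : w ⬝ᵥ u ≠ 0) :
    ¬BddAbove (Set.range fun φ : {v : κ → ℝ // v ⬝ᵥ Sig *ᵥ v ≤ γ} => |φ.1 ⬝ᵥ u|) := by
  rintro ⟨M, hM⟩
  set c := (|M| + 1) / (w ⬝ᵥ u)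
  have hmem : c • w ⬝ᵥ Sig *ᵥ (c • w) ≤ γ := by simp [mulVec_smul, hw, hγ]
  have hle := hM ⟨⟨c • w, hmem⟩, rfl⟩
  simp only [smul_dotProduct, smul_eq_mul, c, div_mul_cancel₀ _ hwu] at hle
  linarith [le_abs_self M, le_abs_self (|M| + 1)]

lemma iSup_abs_dotProduct_le (hSig : Sig.IsSymm) (hP1 : Sig * Pinv * Sig = Sig)
    (hP3 : (Sig * Pinv).IsSymm) (hS1 : Sroot.IsSymm) (hS2 : Sroot * Sroot = Pinv)
    {γ : ℝ} (hγ : 0 ≤ γ) (u : κ → ℝ) :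
    ⨆ φ : {v : κ → ℝ // v ⬝ᵥ Sig *ᵥ v ≤ γ}, |φ.1 ⬝ᵥ u| ≤
      √γ * √(Sroot *ᵥ u ⬝ᵥ Sroot *ᵥ u) := by
  by_cases hu : (Sig * Pinv) *ᵥ u = u
  · refine Real.iSup_le (fun φ => ?_) (by positivity)
    refine (abs_dotProduct_le_of_mulVec_eq hSig hP1 hS1 hS2 hu φ.1).trans ?_
    gcongr
    exact φ.2
  -- Off the range of `Sig` the supremum is infinite, and `⨆` takes the junk value `0`.
  · obtain ⟨w, hw, hwu⟩ := exists_mulVec_eq_zero_dotProduct_ne_zero hSig hP1 hP3 hu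
    rw [Real.iSup_of_not_bddAbove (not_bddAbove_abs_dotProduct hγ hw hwu)]
    positivity

end PseudoInverse

theorem empirical_rademacher_le {κ ι : Type*} [Fintype κ] [Fintype ι] [DecidableEq ι]
    {Sig Pinv Sroot : Matrix κ κ ℝ} (hSig : Sig.IsSymm) (hP1 : Sig * Pinv * Sig = Sig)
    (hP3 : (Sig * Pinv).IsSymm) (hS1 : Sroot.IsSymm) (hS2 : Sroot * Sroot = Pinv)
    {γ : ℝ} (hγ : 0 ≤ γ) (v : ι → κ → ℝ) {c : ℝ} (hc : 0 ≤ c) :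
    1 / (2 : ℝ) ^ Fintype.card ι *
        ∑ s : ι → Bool, ⨆ φ : {v : κ → ℝ // v ⬝ᵥ Sig *ᵥ v ≤ γ},
          |c * ∑ i, (if s i then (1 : ℝ) else -1) * (φ.1 ⬝ᵥ v i)| ≤
      c * √γ * √(∑ i, v i ⬝ᵥ Pinv *ᵥ v i) := by
  set u : (ι → Bool) → κ → ℝ := fun s => ∑ i, (if s i then (1 : ℝ) else -1) • v i
  have hsup : ∀ s, ⨆ φ : {v : κ → ℝ // v ⬝ᵥ Sig *ᵥ v ≤ γ},
      |c * ∑ i, (if s i then (1 : ℝ) else -1) * (φ.1 ⬝ᵥ v i)| ≤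
        c * (√γ * √(Sroot *ᵥ u s ⬝ᵥ Sroot *ᵥ u s)) := by
    intro s
    have hlin : ∀ φ : κ → ℝ,
        ∑ i, (if s i then (1 : ℝ) else -1) * (φ ⬝ᵥ v i) = φ ⬝ᵥ u s := fun φ => by
      simp only [u, dotProduct_sum, dotProduct_smul, smul_eq_mul]
    simp_rw [hlin, abs_mul, abs_of_nonneg hc, ← Real.mul_iSup_of_nonneg hc]
    exact mul_le_mul_of_nonneg_left (iSup_abs_dotProduct_le hSig hP1 hP3 hS1 hS2 hγ _) hc
  have hSu : ∀ s, Sroot *ᵥ u s = ∑ i, (if s i then (1 : ℝ) else -1) • Sroot *ᵥ v i :=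
    fun s => by simp only [u, mulVec_sum, mulVec_smul]
  calc _ ≤ 1 / (2 : ℝ) ^ Fintype.card ι * ∑ s : ι → Bool,
        c * (√γ * √(Sroot *ᵥ u s ⬝ᵥ Sroot *ᵥ u s)) := by gcongr with s; exact hsup s
    _ = c * √γ * (1 / 2 ^ Fintype.card ι * ∑ s : ι → Bool,
        √(Sroot *ᵥ u s ⬝ᵥ Sroot *ᵥ u s)) := by rw [← Finset.mul_sum, ← Finset.mul_sum]; ring
    _ ≤ c * √γ * (1 / 2 ^ Fintype.card ι *
        (2 ^ Fintype.card ι * √(∑ i, Sroot *ᵥ v i ⬝ᵥ Sroot *ᵥ v i))) := by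
      simp_rw [hSu]
      gcongr
      exact sum_sqrt_dotProduct_self_sum_sign_smul_le _
    _ = c * √γ * √(∑ i, v i ⬝ᵥ Pinv *ᵥ v i) := by
      simp_rw [dotProduct_mulVec_eq_of_mul_self hS1 hS2]
      field_simp

section SecondMoment

variable {α κ : Type*} [MeasurableSpace α] [Fintype κ] {T : Measure α} {f : α → κ → ℝ}

lemma memLp_two_apply_of_integrable_sum_sq
    (hf : ∀ t, AEStronglyMeasurable (fun x => f x t) T)
    (h2 : Integrable (fun x => ∑ t, f x t ^ 2) T) (a : κ) : MemLp (fun x => f x a) 2 T := by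
  refine (memLp_two_iff_integrable_sq (hf a)).2
    (h2.mono' ((hf a).pow 2) (ae_of_all _ fun x => ?_))
  rw [Real.norm_eq_abs, abs_of_nonneg (sq_nonneg _)]
  exact Finset.single_le_sum (fun t _ => sq_nonneg (f x t)) (Finset.mem_univ a)

lemma integrable_mul_apply_of_integrable_sum_sq
    (hf : ∀ t, AEStronglyMeasurable (fun x => f x t) T)
    (h2 : Integrable (fun x => ∑ t, f x t ^ 2) T) (a b : κ) :
    Integrable (fun x => f x a * f x b) T :=
  (memLp_two_apply_of_integrable_sum_sq hf h2 a).integrable_mul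
    (memLp_two_apply_of_integrable_sum_sq hf h2 b)

lemma integrable_dotProduct_mulVec (hf : ∀ t, AEStronglyMeasurable (fun x => f x t) T)
    (h2 : Integrable (fun x => ∑ t, f x t ^ 2) T) (M : Matrix κ κ ℝ) :
    Integrable (fun x => f x ⬝ᵥ M *ᵥ f x) T := by
  simp_rw [dotProduct_mulVec_eq_sum]
  exact integrable_finsetSum _ fun a _ => integrable_finsetSum _ fun b _ =>
    (integrable_mul_apply_of_integrable_sum_sq hf h2 b a).const_mul _

lemma integral_dotProduct_mulVec (hf : ∀ t, AEStronglyMeasurable (fun x => f x t) T)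
    (h2 : Integrable (fun x => ∑ t, f x t ^ 2) T) (M : Matrix κ κ ℝ) :
    ∫ x, f x ⬝ᵥ M *ᵥ f x ∂T = (M * of fun a b => ∫ x, f x a * f x b ∂T).trace := by
  simp_rw [dotProduct_mulVec_eq_sum]
  have hint : ∀ a b, Integrable (fun x => M a b * (f x b * f x a)) T := fun a b =>
    (integrable_mul_apply_of_integrable_sum_sq hf h2 b a).const_mul _
  rw [integral_finsetSum _ fun a _ => integrable_finsetSum _ fun b _ => hint a b]
  refine Finset.sum_congr rfl fun a _ => ?_
  rw [integral_finsetSum _ fun b _ => hint a b]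
  simp only [integral_const_mul, diag_apply, mul_apply, of_apply]

end SecondMoment

section Expectation

variable {Ω E : Type*} [MeasurableSpace Ω] [MeasurableSpace E] {μ : Measure Ω}

lemma MeasureTheory.Integrable.sqrt [IsFiniteMeasure μ] {g : Ω → ℝ} (hg : Integrable g μ)
    (h0 : 0 ≤ᵐ[μ] g) : Integrable (fun ω => √(g ω)) μ := by
  refine MemLp.integrable one_le_two ?_
  have hsm : AEStronglyMeasurable (fun ω => √(g ω)) μ :=
    Real.continuous_sqrt.comp_aestronglyMeasurable hg.aestronglyMeasurable
  refine (memLp_two_iff_integrable_sq hsm).2 (hg.congr ?_)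
  filter_upwards [h0] with ω hω using (Real.sq_sqrt hω).symm

lemma integral_sqrt_le_sqrt_integral [IsProbabilityMeasure μ] {g : Ω → ℝ}
    (hg : Integrable g μ) (h0 : 0 ≤ᵐ[μ] g) : ∫ ω, √(g ω) ∂μ ≤ √(∫ ω, g ω ∂μ) :=
  Real.strictConcaveOn_sqrt.concaveOn.le_map_integral Real.continuous_sqrt.continuousOn
    isClosed_Ici h0 hg (hg.sqrt h0)

variable {ι : Type*} [Fintype ι] {X : ι → Ω → E} {T : Measure E} {h : E → ℝ}

lemma integrable_sum_comp_of_map_eq (hX : ∀ i, AEMeasurable (X i) μ)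
    (hlaw : ∀ i, μ.map (X i) = T) (hh : Integrable h T) : Integrable (fun ω => ∑ i, h (X i ω)) μ :=
  integrable_finsetSum _ fun i _ => ((hlaw i).symm ▸ hh).comp_aemeasurable (hX i)

lemma integral_sum_comp_of_map_eq (hX : ∀ i, AEMeasurable (X i) μ)
    (hlaw : ∀ i, μ.map (X i) = T) (hh : Integrable h T) :
    ∫ ω, ∑ i, h (X i ω) ∂μ = Fintype.card ι * ∫ x, h x ∂T := by
  rw [integral_finsetSum _ fun i _ => ((hlaw i).symm ▸ hh).comp_aemeasurable (hX i)]
  simp_rw [← integral_map (hX _) ((hlaw _).symm ▸ hh.aestronglyMeasurable), hlaw]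
  simp

lemma integral_le_mul_sqrt_of_le_mul_sqrt_sum [IsProbabilityMeasure μ]
    (hX : ∀ i, AEMeasurable (X i) μ) (hlaw : ∀ i, μ.map (X i) = T) (hh : Integrable h T)
    (h0 : ∀ x, 0 ≤ h x) {F : Ω → ℝ} {c : ℝ} (hc : 0 ≤ c) (hF0 : ∀ ω, 0 ≤ F ω)
    (hF : ∀ ω, F ω ≤ c * √(∑ i, h (X i ω))) :
    ∫ ω, F ω ∂μ ≤ c * √(Fintype.card ι * ∫ x, h x ∂T) := by
  have hsum := integrable_sum_comp_of_map_eq hX hlaw hh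
  have hsum0 : 0 ≤ᵐ[μ] fun ω => ∑ i, h (X i ω) :=
    ae_of_all _ fun ω => Finset.sum_nonneg fun i _ => h0 _
  calc ∫ ω, F ω ∂μ ≤ ∫ ω, c * √(∑ i, h (X i ω)) ∂μ :=
        integral_mono_of_nonneg (ae_of_all _ hF0) ((hsum.sqrt hsum0).const_mul c)
          (ae_of_all _ hF)
    _ ≤ c * √(Fintype.card ι * ∫ x, h x ∂T) := by
      rw [integral_const_mul, ← integral_sum_comp_of_map_eq hX hlaw hh]
      gcongr
      exact integral_sqrt_le_sqrt_integral hsum hsum0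

end Expectation

theorem rademacher_two_layer_bound_general
    {Ω : Type*} [MeasurableSpace Ω] (μ : Measure Ω) [IsProbabilityMeasure μ]
    (p d : ℕ) (W : Matrix (Fin p) (Fin d) ℝ)
    (act : ℝ → ℝ) (hact : Measurable act)
    (T : Measure (Fin d → ℝ)) [IsProbabilityMeasure T]
    (hmom : Integrable (fun x => ∑ t : Fin p, (act (W.mulVec x t)) ^ 2) T)
    (γ : ℝ) (hγ : 0 < γ)
    (Sig : Matrix (Fin p) (Fin p) ℝ)
    (hSig : Sig = Matrix.of fun s t => ∫ x, act (W.mulVec x s) * act (W.mulVec x t) ∂T)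
    (μvec : Fin p → ℝ)
    (Pinv Sroot : Matrix (Fin p) (Fin p) ℝ)
    (hP1 : Sig * Pinv * Sig = Sig)
    (hP3 : (Sig * Pinv).IsSymm)
    (hS1 : Sroot.IsSymm) (hS2 : Sroot * Sroot = Pinv)
    (r : ℕ) (B : ℝ)
    (hrank : Sig.rank ≤ r)
    (hB : Real.sqrt (∑ t : Fin p, (Sroot.mulVec μvec t) ^ 2) ≤ B)
    (n : ℕ)
    (X : Fin n → Ω → (Fin d → ℝ))
    (hXmeas : ∀ i, Measurable (X i))
    (hXlaw : ∀ i, Measure.map (X i) μ = T) :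
    (∫ ω, (1 / (2 : ℝ) ^ n) * ∑ s : Fin n → Bool,
        ⨆ φ : {v : Fin p → ℝ // v ⬝ᵥ Sig.mulVec v ≤ γ},
          |(1 / (n : ℝ)) * ∑ i : Fin n,
            (if s i then (1 : ℝ) else -1) *
              (φ.1 ⬝ᵥ fun t => act (W.mulVec (X i ω) t))| ∂μ)
      ≤ 2 * Real.sqrt (γ * ((r : ℝ) + B) / n) := by
  let feature : (Fin d → ℝ) → Fin p → ℝ := fun x t => act ((W *ᵥ x) t)
  have hfeature : ∀ t, AEStronglyMeasurable (fun x => feature x t) T := fun t =>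
    (hact.comp ((measurable_pi_apply t).comp
      (continuous_const.matrix_mulVec continuous_id).measurable)).aestronglyMeasurable
  have hSig_symm : Sig.IsSymm := IsSymm.ext fun a b => by simp [hSig, mul_comm]
  have hq0 : ∀ x, 0 ≤ feature x ⬝ᵥ Pinv *ᵥ feature x := fun x =>
    (dotProduct_mulVec_eq_of_mul_self hS1 hS2 _).symm ▸ dotProduct_self_nonneg _
  have hq_mean : ∫ x, feature x ⬝ᵥ Pinv *ᵥ feature x ∂T ≤ r := by
    rw [integral_dotProduct_mulVec hfeature hmom, ← hSig]
    exact (trace_mul_le_rank_of_mul_mul_eq hP1).trans (by exact_mod_cast hrank)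
  have hB0 : 0 ≤ B := (Real.sqrt_nonneg _).trans hB
  have hempirical : ∀ ω, (1 / (2 : ℝ) ^ n) * ∑ s : Fin n → Bool,
      ⨆ φ : {v : Fin p → ℝ // v ⬝ᵥ Sig.mulVec v ≤ γ},
        |(1 / (n : ℝ)) * ∑ i : Fin n, (if s i then (1 : ℝ) else -1) * (φ.1 ⬝ᵥ feature (X i ω))| ≤
      1 / n * √γ * √(∑ i, feature (X i ω) ⬝ᵥ Pinv *ᵥ feature (X i ω)) := fun ω => by
    simpa only [Fintype.card_fin] using empirical_rademacher_le hSig_symm hP1 hP3 hS1 hS2 hγ.le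
      (fun i => feature (X i ω)) (c := 1 / n) (by positivity)
  calc _ ≤ 1 / n * √γ * √(Fintype.card (Fin n) * ∫ x, feature x ⬝ᵥ Pinv *ᵥ feature x ∂T) :=
        integral_le_mul_sqrt_of_le_mul_sqrt_sum (fun i => (hXmeas i).aemeasurable) hXlaw
          (integrable_dotProduct_mulVec hfeature hmom Pinv) hq0 (by positivity)
          (fun ω => mul_nonneg (by positivity) (Finset.sum_nonneg fun s _ =>
            Real.iSup_nonneg fun φ => abs_nonneg _)) hempirical
    _ ≤ 1 / n * √γ * √(n * r) := by rw [Fintype.card_fin]; gcongr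
    _ = √(γ * r / n) := by
      rw [eq_comm, Real.sqrt_eq_iff_eq_sq (by positivity) (by positivity), mul_pow, mul_pow,
        Real.sq_sqrt hγ.le, Real.sq_sqrt (by positivity)]
      field_simp
    _ ≤ √(γ * (r + B) / n) := by gcongr; linarith
    _ ≤ 2 * √(γ * (r + B) / n) := le_mul_of_one_le_left (Real.sqrt_nonneg _) one_le_two

/-- **Rademacher complexity bound for the constrained two-layer class.**
With feature map `x ↦ (σ(Wx)_t)_t`, second-moment matrix `Σ = E_T[σ(WX)σ(WX)ᵀ]`, mean
`μvec = E_T[σ(WX)]`, a symmetric PSD square root `Sroot` of the Moore–Penrose pseudoinverse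
`Pinv` of `Σ` (characterized by the four Penrose conditions), `rank Σ ≤ r` and
`‖Sroot μvec‖ ≤ B`, the expected Rademacher complexity of
`F = {x ↦ φᵀσ(Wx) : φᵀΣφ ≤ γ}` on an i.i.d. sample of size `n` from `T` is at most
`2√(γ(r+B)/n)`.  The expectation over the signs is written as the average over all
sign patterns `s : Fin n → Bool`. -/
theorem rademacher_two_layer_bound
    {Ω : Type*} [MeasurableSpace Ω] (μ : Measure Ω) [IsProbabilityMeasure μ]
    (p d : ℕ) (W : Matrix (Fin p) (Fin d) ℝ)
    (act : ℝ → ℝ) (hact : Measurable act)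
    (T : Measure (Fin d → ℝ)) [IsProbabilityMeasure T]
    (hmom : Integrable (fun x => ∑ t : Fin p, (act (W.mulVec x t)) ^ 2) T)
    (γ : ℝ) (hγ : 0 < γ)
    (Sig : Matrix (Fin p) (Fin p) ℝ)
    (hSig : Sig = Matrix.of fun s t => ∫ x, act (W.mulVec x s) * act (W.mulVec x t) ∂T)
    (μvec : Fin p → ℝ) (hμvec : μvec = fun t => ∫ x, act (W.mulVec x t) ∂T)
    (Pinv Sroot : Matrix (Fin p) (Fin p) ℝ)
    (hP1 : Sig * Pinv * Sig = Sig) (hP2 : Pinv * Sig * Pinv = Pinv)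
    (hP3 : (Sig * Pinv).IsSymm) (hP4 : (Pinv * Sig).IsSymm)
    (hS1 : Sroot.IsSymm) (hSpos : Sroot.PosSemidef) (hS2 : Sroot * Sroot = Pinv)
    (r : ℕ) (B : ℝ)
    (hrank : Sig.rank ≤ r)
    (hB : Real.sqrt (∑ t : Fin p, (Sroot.mulVec μvec t) ^ 2) ≤ B)
    (n : ℕ) (hn : 0 < n)
    (X : Fin n → Ω → (Fin d → ℝ))
    (hXmeas : ∀ i, Measurable (X i))
    (hXlaw : ∀ i, Measure.map (X i) μ = T)
    (hXindep : iIndepFun X μ) :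
    (∫ ω, (1 / (2 : ℝ) ^ n) * ∑ s : Fin n → Bool,
        ⨆ φ : {v : Fin p → ℝ // v ⬝ᵥ Sig.mulVec v ≤ γ},
          |(1 / (n : ℝ)) * ∑ i : Fin n,
            (if s i then (1 : ℝ) else -1) *
              (φ.1 ⬝ᵥ fun t => act (W.mulVec (X i ω) t))| ∂μ)
      ≤ 2 * Real.sqrt (γ * ((r : ℝ) + B) / n) :=
  rademacher_two_layer_bound_general μ p d W act hact T hmom γ hγ Sig hSig μvec Pinv Sroot hP1 hP3
    hS1 hS2 r B hrank hB n X hXmeas hXlaw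
end

section
/- Let (Ω, ℱ, P) be a probability space and let A, B, M, S, T be random variables on Ω taking values in finite sets. Suppose there exist functions F and G such that M = F(A, B) almost surely and (A, B) = G(M, T) almost surely. Then I(M ; S | T) − I(B ; S | T) = I(A ; S | (B, T)), and in particular I(M ; S | T) ≥ I(B ; S | T). -/
open MeasureTheory ProbabilityTheory

/-- Shannon entropy of a finitely-valued random variable `X` under `μ`:
`H(X) = Σ_a (−P(X=a) log P(X=a))`. -/
noncomputable def finEntropy {Ω : Type*} [MeasurableSpace Ω] {α : Type*} [Fintype α]
    (μ : Measure Ω) (X : Ω → α) : ℝ :=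
  ∑ a : α, Real.negMulLog ((μ (X ⁻¹' {a})).toReal)

/-- Conditional Shannon entropy `H(X | Y) = H(X, Y) − H(Y)`. -/
noncomputable def finCondEntropy {Ω : Type*} [MeasurableSpace Ω] {α β : Type*}
    [Fintype α] [Fintype β] (μ : Measure Ω) (X : Ω → α) (Y : Ω → β) : ℝ :=
  finEntropy μ (fun ω => (X ω, Y ω)) - finEntropy μ Y

/-- Conditional mutual information `I(X ; Y | Z) = H(X | Z) − H(X | (Y, Z))`. -/
noncomputable def finCondMutualInfo {Ω : Type*} [MeasurableSpace Ω] {α β γ : Type*}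
    [Fintype α] [Fintype β] [Fintype γ]
    (μ : Measure Ω) (X : Ω → α) (Y : Ω → β) (Z : Ω → γ) : ℝ :=
  finCondEntropy μ X Z - finCondEntropy μ X (fun ω => (Y ω, Z ω))

/-- Mutual information `I(X ; Y) = H(X) − H(X | Y)`. -/
noncomputable def finMutualInfo {Ω : Type*} [MeasurableSpace Ω] {α β : Type*}
    [Fintype α] [Fintype β] (μ : Measure Ω) (X : Ω → α) (Y : Ω → β) : ℝ :=
  finEntropy μ X - finCondEntropy μ X Y

/-!
Because `(M, T)` and `(A, B, T)` determine each other almost surely, as do `(M, S, T)` and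
`(A, S, B, T)`, the entropies of these tuples agree, and expanding both conditional mutual
informations as alternating sums of joint entropies turns the identity into linear
arithmetic. The inequality is then the nonnegativity of `I(A ; S | (B, T))`: for each value of
the conditioning variable it is Gibbs' inequality between the joint law of `(A, S)` and the
product of its marginals, which follows termwise from `log t ≤ t - 1`.
-/

open Finset Real

lemma mul_log_marginals_le {q a b s : ℝ} (hq : 0 ≤ q) (hqa : q ≤ a) (hqb : q ≤ b)
    (has : a ≤ s) : q * (log a + log b - log q - log s) ≤ a * b / s - q := by
  rcases hq.eq_or_lt with rfl | hq
  · simpa using div_nonneg (mul_nonneg hqa hqb) (hqa.trans has)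
  have ha := hq.trans_le hqa
  have hb := hq.trans_le hqb
  have hs := ha.trans_le has
  have hlog : log a + log b - log q - log s = log (a * b / (q * s)) := by
    rw [log_div (by positivity) (by positivity), log_mul ha.ne' hb.ne', log_mul hq.ne' hs.ne']
    ring
  calc q * (log a + log b - log q - log s) ≤ q * (a * b / (q * s) - 1) := by
        rw [hlog]; gcongr; exact log_le_sub_one_of_pos (by positivity)
    _ = a * b / s - q := by field_simp

lemma negMulLog_sum_add_sum_negMulLog_le {α β : Type*} [Fintype α] [Fintype β]
    (q : α → β → ℝ) (hq : ∀ x y, 0 ≤ q x y) :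
    negMulLog (∑ x, ∑ y, q x y) + ∑ x, ∑ y, negMulLog (q x y)
      ≤ ∑ x, negMulLog (∑ y, q x y) + ∑ y, negMulLog (∑ x, q x y) := by
  set a : α → ℝ := fun x => ∑ y, q x y
  set b : β → ℝ := fun y => ∑ x, q x y
  set s : ℝ := ∑ x, ∑ y, q x y
  have ha : ∀ x, ∑ y, q x y = a x := fun _ => rfl
  have hb : ∀ y, ∑ x, q x y = b y := fun _ => rfl
  have hsa : ∑ x, a x = s := rfl
  have hsb : ∑ y, b y = s := sum_comm
  have hqa : ∀ x y, q x y ≤ a x := fun x y => single_le_sum (fun y _ => hq x y) (mem_univ y)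
  have hqb : ∀ x y, q x y ≤ b y := fun x y => single_le_sum (fun x _ => hq x y) (mem_univ x)
  have has : ∀ x, a x ≤ s := fun x =>
    single_le_sum (fun x _ => sum_nonneg fun y _ => hq x y) (mem_univ x)
  have hgibbs : ∑ x, ∑ y, q x y * (log (a x) + log (b y) - log (q x y) - log s) ≤ 0 :=
    calc _ ≤ ∑ x, ∑ y, (a x * b y / s - q x y) :=
          sum_le_sum fun x _ => sum_le_sum fun y _ =>
            mul_log_marginals_le (hq x y) (hqa x y) (hqb x y) (has x)
      _ = 0 := by
          simp only [sum_sub_distrib, div_eq_mul_inv, ← sum_mul, ← mul_sum, hsb, hsa]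
          rw [mul_self_mul_inv, sub_self]
  have hexpand : ∑ x, negMulLog (a x) + ∑ y, negMulLog (b y) - negMulLog s
      - ∑ x, ∑ y, negMulLog (q x y)
      = -∑ x, ∑ y, q x y * (log (a x) + log (b y) - log (q x y) - log s) := by
    simp only [negMulLog, mul_add, mul_sub, sum_add_distrib, sum_sub_distrib, ← sum_mul]
    rw [sum_comm (f := fun x y => q x y * log (b y))]
    simp only [← sum_mul, ha, hb, hsa, neg_mul, sum_neg_distrib]
    ring
  linarith

section Entropy

variable {Ω : Type*} [MeasurableSpace Ω] {μ : Measure Ω} {α β γ : Type*}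

lemma finEntropy_prod_comm [Fintype α] [Fintype β] (X : Ω → α) (Y : Ω → β) :
    finEntropy μ (fun ω => (X ω, Y ω)) = finEntropy μ (fun ω => (Y ω, X ω)) := by
  refine Fintype.sum_equiv (Equiv.prodComm α β) _ _ fun p => ?_
  congr 3
  ext ω
  simp [Prod.ext_iff, and_comm]

lemma finEntropy_prod_eq_of_ae_comp [Fintype α] [Fintype β] {X : Ω → α} {Y : Ω → β}
    {f : α → β} (hf : ∀ᵐ ω ∂μ, Y ω = f (X ω)) :
    finEntropy μ (fun ω => (X ω, Y ω)) = finEntropy μ X := by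
  classical
  have hfiber : ∀ a b, μ ((fun ω => (X ω, Y ω)) ⁻¹' {(a, b)})
      = if b = f a then μ (X ⁻¹' {a}) else 0 := by
    intro a b
    have : ((fun ω => (X ω, Y ω)) ⁻¹' {(a, b)} : Set Ω)
        =ᵐ[μ] (if b = f a then X ⁻¹' {a} else ∅ : Set Ω) := by
      rw [Filter.eventuallyEq_set]
      filter_upwards [hf] with ω hω
      by_cases hx : X ω = a <;> split_ifs <;> simp_all [Prod.ext_iff, eq_comm]
    rw [measure_congr this]
    split_ifs <;> simp
  simp only [finEntropy, Fintype.sum_prod_type, hfiber, apply_ite, ENNReal.toReal_zero,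
    negMulLog_zero, sum_ite_eq', mem_univ, if_true]

lemma finEntropy_eq_of_ae_comp [Fintype α] [Fintype β] {X : Ω → α} {Y : Ω → β}
    {f : α → β} {g : β → α} (hf : ∀ᵐ ω ∂μ, Y ω = f (X ω)) (hg : ∀ᵐ ω ∂μ, X ω = g (Y ω)) :
    finEntropy μ X = finEntropy μ Y := by
  rw [← finEntropy_prod_eq_of_ae_comp hf, finEntropy_prod_comm, finEntropy_prod_eq_of_ae_comp hg]

lemma measureReal_eq_sum_inter_preimage [Fintype β] [MeasurableSpace β]
    [MeasurableSingletonClass β] [IsFiniteMeasure μ] {Y : Ω → β} (hY : Measurable Y)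
    (s : Set Ω) : μ.real s = ∑ y, μ.real (s ∩ Y ⁻¹' {y}) := by
  have hfib : ∀ y ∈ (univ : Finset β), MeasurableSet (Y ⁻¹' {y}) :=
    fun y _ => hY (measurableSet_singleton y)
  rw [← measureReal_restrict_apply_univ, ← Set.preimage_univ (f := Y), ← coe_univ,
    ← sum_measureReal_preimage_singleton _ hfib]
  simp only [measureReal_restrict_apply (hfib _ (mem_univ _)), Set.inter_comm]

lemma finCondMutualInfo_nonneg [Fintype α] [Fintype β] [Fintype γ]
    [MeasurableSpace α] [MeasurableSingletonClass α] [MeasurableSpace β]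
    [MeasurableSingletonClass β] [IsFiniteMeasure μ] {X : Ω → α} {Y : Ω → β} (Z : Ω → γ)
    (hX : Measurable X) (hY : Measurable Y) : 0 ≤ finCondMutualInfo μ X Y Z := by
  set p : α → β → γ → ℝ := fun x y z => μ.real (Z ⁻¹' {z} ∩ X ⁻¹' {x} ∩ Y ⁻¹' {y})
  have hZ : finEntropy μ Z = ∑ z, negMulLog (∑ x, ∑ y, p x y z) := by
    refine sum_congr rfl fun z _ => ?_
    rw [← measureReal_def, measureReal_eq_sum_inter_preimage hX]
    exact congrArg negMulLog (sum_congr rfl fun x _ => measureReal_eq_sum_inter_preimage hY _)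
  have hXZ : finEntropy μ (fun ω => (X ω, Z ω)) = ∑ z, ∑ x, negMulLog (∑ y, p x y z) := by
    rw [finEntropy, Fintype.sum_prod_type, sum_comm]
    refine sum_congr rfl fun z _ => sum_congr rfl fun x _ => ?_
    rw [← measureReal_def, ← Set.singleton_prod_singleton, Set.mk_preimage_prod, Set.inter_comm,
      measureReal_eq_sum_inter_preimage hY]
  have hYZ : finEntropy μ (fun ω => (Y ω, Z ω)) = ∑ z, ∑ y, negMulLog (∑ x, p x y z) := by
    rw [finEntropy, Fintype.sum_prod_type, sum_comm]
    refine sum_congr rfl fun z _ => sum_congr rfl fun y _ => ?_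
    rw [← measureReal_def, ← Set.singleton_prod_singleton, Set.mk_preimage_prod, Set.inter_comm,
      measureReal_eq_sum_inter_preimage hX]
    simp only [p, Set.inter_right_comm]
  have hXYZ : finEntropy μ (fun ω => (X ω, (Y ω, Z ω)))
      = ∑ z, ∑ x, ∑ y, negMulLog (p x y z) := by
    calc _ = ∑ x, ∑ y, ∑ z, negMulLog (p x y z) := by
          simp only [finEntropy, Fintype.sum_prod_type, ← measureReal_def,
            ← Set.singleton_prod_singleton, Set.mk_preimage_prod]
          simp only [← Set.inter_assoc, Set.inter_comm _ (Z ⁻¹' _), p]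
      _ = _ := (sum_congr rfl fun _ _ => sum_comm).trans sum_comm
  have hgibbs := sum_le_sum fun z (_ : z ∈ (univ : Finset γ)) =>
    negMulLog_sum_add_sum_negMulLog_le (fun x y => p x y z) fun _ _ => measureReal_nonneg
  simp only [sum_add_distrib] at hgibbs
  simp only [finCondMutualInfo, finCondEntropy, hZ, hXZ, hYZ, hXYZ]
  linarith

end Entropy

theorem mixing_increases_information_general
    {Ω : Type*} [MeasurableSpace Ω] (μ : Measure Ω) [IsProbabilityMeasure μ]
    {αA αB αM αS αT : Type*}
    [Fintype αA] [Fintype αB] [Fintype αM] [Fintype αS] [Fintype αT]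
    [MeasurableSpace αA] [MeasurableSingletonClass αA]
    [MeasurableSpace αS] [MeasurableSingletonClass αS]
    (A : Ω → αA) (B : Ω → αB) (M : Ω → αM) (S : Ω → αS) (T : Ω → αT)
    (hA : Measurable A) (hS : Measurable S)
    (F : αA × αB → αM) (G : αM × αT → αA × αB)
    (hF : ∀ᵐ ω ∂μ, M ω = F (A ω, B ω))
    (hG : ∀ᵐ ω ∂μ, (A ω, B ω) = G (M ω, T ω)) :
    finCondMutualInfo μ M S T - finCondMutualInfo μ B S T
        = finCondMutualInfo μ A S (fun ω => (B ω, T ω))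
      ∧ finCondMutualInfo μ B S T ≤ finCondMutualInfo μ M S T := by
  have hMT : finEntropy μ (fun ω => (M ω, T ω)) = finEntropy μ (fun ω => (A ω, (B ω, T ω))) :=
    finEntropy_eq_of_ae_comp (f := fun mt => ((G mt).1, ((G mt).2, mt.2)))
      (g := fun abt => (F (abt.1, abt.2.1), abt.2.2))
      (by filter_upwards [hG] with ω h; rw [← h])
      (by filter_upwards [hF] with ω h; rw [h])
  have hMST : finEntropy μ (fun ω => (M ω, (S ω, T ω)))
      = finEntropy μ (fun ω => (A ω, (S ω, (B ω, T ω)))) :=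
    finEntropy_eq_of_ae_comp
      (f := fun mst => ((G (mst.1, mst.2.2)).1, (mst.2.1, ((G (mst.1, mst.2.2)).2, mst.2.2))))
      (g := fun asbt => (F (asbt.1, asbt.2.2.1), (asbt.2.1, asbt.2.2.2)))
      (by filter_upwards [hG] with ω h; rw [← h])
      (by filter_upwards [hF] with ω h; rw [h])
  have hBST : finEntropy μ (fun ω => (B ω, (S ω, T ω)))
      = finEntropy μ (fun ω => (S ω, (B ω, T ω))) :=
    finEntropy_eq_of_ae_comp (f := fun bst => (bst.2.1, (bst.1, bst.2.2)))
      (g := fun sbt => (sbt.2.1, (sbt.1, sbt.2.2))) (ae_of_all _ fun _ => rfl)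
      (ae_of_all _ fun _ => rfl)
  have hchain : finCondMutualInfo μ M S T - finCondMutualInfo μ B S T
      = finCondMutualInfo μ A S (fun ω => (B ω, T ω)) := by
    simp only [finCondMutualInfo, finCondEntropy]
    linarith
  exact ⟨hchain, by linarith [finCondMutualInfo_nonneg (μ := μ) (fun ω => (B ω, T ω)) hA hS]⟩

/-- **MetaMix increases the information between outer-loop targets and the support set.**
If `M = F(A, B)` a.s. and `(A, B)` is recoverable as `G(M, T)` a.s., then
`I(M ; S | T) − I(B ; S | T) = I(A ; S | (B, T))`, and in particular
`I(B ; S | T) ≤ I(M ; S | T)`. -/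
theorem mixing_increases_information
    {Ω : Type*} [MeasurableSpace Ω] (μ : Measure Ω) [IsProbabilityMeasure μ]
    {αA αB αM αS αT : Type*}
    [Fintype αA] [Fintype αB] [Fintype αM] [Fintype αS] [Fintype αT]
    [MeasurableSpace αA] [MeasurableSingletonClass αA]
    [MeasurableSpace αB] [MeasurableSingletonClass αB]
    [MeasurableSpace αM] [MeasurableSingletonClass αM]
    [MeasurableSpace αS] [MeasurableSingletonClass αS]
    [MeasurableSpace αT] [MeasurableSingletonClass αT]
    (A : Ω → αA) (B : Ω → αB) (M : Ω → αM) (S : Ω → αS) (T : Ω → αT)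
    (hA : Measurable A) (hB : Measurable B) (hM : Measurable M)
    (hS : Measurable S) (hT : Measurable T)
    (F : αA × αB → αM) (G : αM × αT → αA × αB)
    (hF : ∀ᵐ ω ∂μ, M ω = F (A ω, B ω))
    (hG : ∀ᵐ ω ∂μ, (A ω, B ω) = G (M ω, T ω)) :
    finCondMutualInfo μ M S T - finCondMutualInfo μ B S T
        = finCondMutualInfo μ A S (fun ω => (B ω, T ω))
      ∧ finCondMutualInfo μ B S T ≤ finCondMutualInfo μ M S T :=
  mixing_increases_information_general μ A B M S T hA hS F G hF hG
end

section
/- Let (Ω, ℱ, P) be a probability space and let θ, S, Q, M be random variables on Ω taking values in finite sets. Suppose: (i) Q is independent of θ; (ii) Q is conditionally independent of θ given S; and (iii) there exist functions g and h such that M = g(S, Q) almost surely and S = h(M, Q) almost surely. Then I(θ ; M | Q) = H(θ) − H(θ | S) = I(θ ; S). -/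
/-! Given `Q`, the variables `M` and `S` determine each other almost surely, so
`I(θ ; M | Q) = H(θ | Q) − H(θ | S, Q)`. Independence of `θ` and `Q` gives `H(θ | Q) = H(θ)`, and
their conditional independence given `S` gives `H(θ | S, Q) = H(θ | S)`. On each atom `{S = s}`
both reduce to the same identity: if `P(x, y) · p = P(x) · P(y)` with both marginals of total mass
`p`, then `negMulLog (P(x) P(y) / p)` splits additively, because `negMulLog (u v) =
v negMulLog u + u negMulLog v`. -/

open MeasureTheory ProbabilityTheory

section

lemma preimage_pair_singleton {Ω α β : Type*} (X : Ω → α) (Y : Ω → β) (x : α) (y : β) :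
    (fun ω => (X ω, Y ω)) ⁻¹' {(x, y)} = X ⁻¹' {x} ∩ Y ⁻¹' {y} := by
  rw [← Set.singleton_prod_singleton, Set.mk_preimage_prod]

variable {Ω : Type*} [MeasurableSpace Ω] {μ : Measure Ω}

lemma finEntropy_congr_ae {α : Type*} [Fintype α] {X X' : Ω → α} (hX : X =ᵐ[μ] X') :
    finEntropy μ X = finEntropy μ X' := by
  refine Finset.sum_congr rfl fun a _ => ?_
  rw [measure_congr (hX.preimage {a})]

lemma finEntropy_comp_of_injective {α β : Type*} [Fintype α] [Fintype β] (X : Ω → α)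
    {f : α → β} (hf : Function.Injective f) :
    finEntropy μ (fun ω => f (X ω)) = finEntropy μ X := by
  refine (Fintype.sum_of_injective f hf _ _ (fun b hb => ?_) fun a => ?_).symm
  · have : (fun ω => f (X ω)) ⁻¹' {b} = ∅ :=
      Set.eq_empty_of_forall_notMem fun ω hω => hb ⟨X ω, hω⟩
    simp [this]
  · have : (fun ω => f (X ω)) ⁻¹' {f a} = X ⁻¹' {a} := by ext; simp [hf.eq_iff]
    rw [this]

lemma finEntropy_eq_of_ae_eq_comp {α β : Type*} [Fintype α] [Fintype β]
    {X : Ω → α} {X' : Ω → β} (f : α → β) (f' : β → α)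
    (hX' : ∀ᵐ ω ∂μ, X' ω = f (X ω)) (hX : ∀ᵐ ω ∂μ, X ω = f' (X' ω)) :
    finEntropy μ X' = finEntropy μ X := by
  have hpair : (fun ω => (f' (X' ω), X' ω)) =ᵐ[μ] fun ω => (X ω, f (X ω)) :=
    (hX.and hX').mono fun _ h => Prod.ext h.1.symm h.2
  calc finEntropy μ X' = finEntropy μ (fun ω => (f' (X' ω), X' ω)) :=
        (finEntropy_comp_of_injective X' (f := fun b => (f' b, b))
          fun _ _ h => congrArg Prod.snd h).symm
    _ = finEntropy μ (fun ω => (X ω, f (X ω))) := finEntropy_congr_ae hpair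
    _ = finEntropy μ X :=
        finEntropy_comp_of_injective X (f := fun a => (a, f a)) fun _ _ h => congrArg Prod.fst h

lemma sum_sum_negMulLog_of_mul_eq_mul {ι κ : Type*} [Fintype ι] [Fintype κ]
    {a : ι → κ → ℝ} {b : ι → ℝ} {c : κ → ℝ} {p : ℝ} (hp : p ≠ 0)
    (hb : ∑ i, b i = p) (hc : ∑ j, c j = p) (ha : ∀ i j, a i j * p = b i * c j) :
    ∑ i, ∑ j, Real.negMulLog (a i j)
      = ∑ i, Real.negMulLog (b i) + ∑ j, Real.negMulLog (c j) - Real.negMulLog p := by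
  have hterm : ∀ i j, Real.negMulLog (a i j) = p⁻¹ * (c j * Real.negMulLog (b i))
      + p⁻¹ * (b i * Real.negMulLog (c j)) + b i * c j * (p⁻¹ * Real.log p) := by
    intro i j
    rw [(eq_mul_inv_iff_mul_eq₀ hp).2 (ha i j), Real.negMulLog_mul, Real.negMulLog_mul]
    simp only [Real.negMulLog, Real.log_inv]
    ring
  simp only [hterm, Finset.sum_add_distrib, ← Finset.mul_sum, ← Finset.sum_mul, hb, hc]
  rw [Real.negMulLog]
  field_simp
  ring

lemma finEntropy_pair {α β : Type*} [Fintype α] [Fintype β] (X : Ω → α) (Y : Ω → β) :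
    finEntropy μ (fun ω => (X ω, Y ω))
      = ∑ x, ∑ y, Real.negMulLog (μ (X ⁻¹' {x} ∩ Y ⁻¹' {y})).toReal := by
  simp only [finEntropy, Fintype.sum_prod_type, preimage_pair_singleton]

section Measurable

variable {α β : Type*} [Fintype α] [Fintype β]
  [MeasurableSpace α] [MeasurableSingletonClass α] [MeasurableSpace β] [MeasurableSingletonClass β]
  {X : Ω → α} {Y : Ω → β}

lemma sum_toReal_measure_preimage_singleton_inter [IsFiniteMeasure μ] (hX : Measurable X)
    (A : Set Ω) :
    ∑ x, (μ (X ⁻¹' {x} ∩ A)).toReal = (μ A).toReal := by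
  have := sum_measureReal_preimage_singleton (μ := μ.restrict A) Finset.univ
    fun x _ => hX (measurableSet_singleton x)
  simpa [measureReal_def, Measure.restrict_apply (hX (measurableSet_singleton _))] using this

lemma sum_sum_negMulLog_measure_inter_of_mul_eq_mul [IsFiniteMeasure μ] (hX : Measurable X)
    (hY : Measurable Y) {A : Set Ω} (hXY : ∀ x y, μ (X ⁻¹' {x} ∩ Y ⁻¹' {y} ∩ A) * μ A
      = μ (X ⁻¹' {x} ∩ A) * μ (Y ⁻¹' {y} ∩ A)) :
    ∑ x, ∑ y, Real.negMulLog (μ (X ⁻¹' {x} ∩ Y ⁻¹' {y} ∩ A)).toReal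
      = ∑ x, Real.negMulLog (μ (X ⁻¹' {x} ∩ A)).toReal
        + ∑ y, Real.negMulLog (μ (Y ⁻¹' {y} ∩ A)).toReal - Real.negMulLog (μ A).toReal := by
  by_cases hA0 : μ A = 0
  · simp [hA0, measure_mono_null Set.inter_subset_right hA0]
  refine sum_sum_negMulLog_of_mul_eq_mul ?_ (sum_toReal_measure_preimage_singleton_inter hX A)
    (sum_toReal_measure_preimage_singleton_inter hY A) fun x y => ?_
  · exact ENNReal.toReal_ne_zero.2 ⟨hA0, measure_ne_top μ A⟩
  · rw [← ENNReal.toReal_mul, ← ENNReal.toReal_mul, hXY]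

lemma finEntropy_pair_of_indepFun [IsProbabilityMeasure μ] (hX : Measurable X)
    (hY : Measurable Y) (hXY : IndepFun X Y μ) :
    finEntropy μ (fun ω => (X ω, Y ω)) = finEntropy μ X + finEntropy μ Y := by
  have hatom : ∀ x y, μ (X ⁻¹' {x} ∩ Y ⁻¹' {y} ∩ Set.univ) * μ Set.univ
      = μ (X ⁻¹' {x} ∩ Set.univ) * μ (Y ⁻¹' {y} ∩ Set.univ) := fun x y => by
    simpa using hXY.measure_inter_preimage_eq_mul _ _
      (measurableSet_singleton x) (measurableSet_singleton y)
  rw [finEntropy_pair]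
  simpa [finEntropy] using sum_sum_negMulLog_measure_inter_of_mul_eq_mul hX hY hatom

lemma finEntropy_pair_pair_of_condIndep [IsFiniteMeasure μ] {γ : Type*} [Fintype γ] {Z : Ω → γ}
    (hX : Measurable X) (hY : Measurable Y)
    (hXYZ : ∀ x y z, μ (X ⁻¹' {x} ∩ Y ⁻¹' {y} ∩ Z ⁻¹' {z}) * μ (Z ⁻¹' {z})
      = μ (X ⁻¹' {x} ∩ Z ⁻¹' {z}) * μ (Y ⁻¹' {y} ∩ Z ⁻¹' {z})) :
    finEntropy μ (fun ω => ((X ω, Y ω), Z ω))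
      = finEntropy μ (fun ω => (X ω, Z ω)) + finEntropy μ (fun ω => (Y ω, Z ω))
        - finEntropy μ Z := by
  simp only [finEntropy_pair, Fintype.sum_prod_type, preimage_pair_singleton]
  rw [(Finset.sum_congr rfl fun _ _ => Finset.sum_comm).trans Finset.sum_comm,
    Finset.sum_congr rfl fun z _ =>
      sum_sum_negMulLog_measure_inter_of_mul_eq_mul hX hY (hXYZ · · z),
    Finset.sum_sub_distrib, Finset.sum_add_distrib, finEntropy]
  congr 2 <;> exact Finset.sum_comm

end Measurable

end

theorem metamix_information_contribution_general
    {Ω : Type*} [MeasurableSpace Ω] (μ : Measure Ω) [IsProbabilityMeasure μ]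
    {αθ αS αQ αM : Type*}
    [Fintype αθ] [Fintype αS] [Fintype αQ] [Fintype αM]
    [MeasurableSpace αθ] [MeasurableSingletonClass αθ]
    [MeasurableSpace αQ] [MeasurableSingletonClass αQ]
    (θf : Ω → αθ) (S : Ω → αS) (Q : Ω → αQ) (M : Ω → αM)
    (hθ : Measurable θf) (hQ : Measurable Q)
    (hindep : IndepFun Q θf μ)
    (hcondindep : ∀ (q : αQ) (t : αθ) (s : αS),
      μ (Q ⁻¹' {q} ∩ θf ⁻¹' {t} ∩ S ⁻¹' {s}) * μ (S ⁻¹' {s})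
        = μ (Q ⁻¹' {q} ∩ S ⁻¹' {s}) * μ (θf ⁻¹' {t} ∩ S ⁻¹' {s}))
    (g : αS × αQ → αM) (h : αM × αQ → αS)
    (hg : ∀ᵐ ω ∂μ, M ω = g (S ω, Q ω))
    (hh : ∀ᵐ ω ∂μ, S ω = h (M ω, Q ω)) :
    finCondMutualInfo μ θf M Q = finEntropy μ θf - finCondEntropy μ θf S
      ∧ finCondMutualInfo μ θf M Q = finMutualInfo μ θf S := by
  have hMQ : finEntropy μ (fun ω => (M ω, Q ω)) = finEntropy μ (fun ω => (Q ω, S ω)) :=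
    finEntropy_eq_of_ae_eq_comp (fun p => (g (p.2, p.1), p.1)) (fun p => (p.2, h p))
      (hg.mono fun ω hω => by simp [hω]) (hh.mono fun ω hω => by simp [← hω])
  have hθMQ : finEntropy μ (fun ω => (θf ω, (M ω, Q ω)))
      = finEntropy μ (fun ω => ((Q ω, θf ω), S ω)) :=
    finEntropy_eq_of_ae_eq_comp (fun p => (p.1.2, (g (p.2, p.1.1), p.1.1)))
      (fun p => ((p.2.2, p.1), h p.2))
      (hg.mono fun ω hω => by simp [hω]) (hh.mono fun ω hω => by simp [← hω])
  have hθQ := finEntropy_pair_of_indepFun hθ hQ hindep.symm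
  have hQθS := finEntropy_pair_pair_of_condIndep hQ hθ hcondindep
  have hI : finCondMutualInfo μ θf M Q = finEntropy μ θf - finCondEntropy μ θf S := by
    simp only [finCondMutualInfo, finCondEntropy]
    rw [hθMQ, hMQ, hθQ, hQθS]
    ring
  exact ⟨hI, hI⟩

/-- **MetaMix contributes the full support-set information to the initialization.**
If (i) `Q` is independent of `θ`, (ii) `Q` is conditionally independent of `θ` given `S`
(stated elementarily on atoms), and (iii) `M = g(S, Q)` a.s. with `S = h(M, Q)` a.s., then
`I(θ ; M | Q) = H(θ) − H(θ | S) = I(θ ; S)`. -/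
theorem metamix_information_contribution
    {Ω : Type*} [MeasurableSpace Ω] (μ : Measure Ω) [IsProbabilityMeasure μ]
    {αθ αS αQ αM : Type*}
    [Fintype αθ] [Fintype αS] [Fintype αQ] [Fintype αM]
    [MeasurableSpace αθ] [MeasurableSingletonClass αθ]
    [MeasurableSpace αS] [MeasurableSingletonClass αS]
    [MeasurableSpace αQ] [MeasurableSingletonClass αQ]
    [MeasurableSpace αM] [MeasurableSingletonClass αM]
    (θf : Ω → αθ) (S : Ω → αS) (Q : Ω → αQ) (M : Ω → αM)
    (hθ : Measurable θf) (hS : Measurable S) (hQ : Measurable Q) (hM : Measurable M)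
    (hindep : IndepFun Q θf μ)
    (hcondindep : ∀ (q : αQ) (t : αθ) (s : αS),
      μ (Q ⁻¹' {q} ∩ θf ⁻¹' {t} ∩ S ⁻¹' {s}) * μ (S ⁻¹' {s})
        = μ (Q ⁻¹' {q} ∩ S ⁻¹' {s}) * μ (θf ⁻¹' {t} ∩ S ⁻¹' {s}))
    (g : αS × αQ → αM) (h : αM × αQ → αS)
    (hg : ∀ᵐ ω ∂μ, M ω = g (S ω, Q ω))
    (hh : ∀ᵐ ω ∂μ, S ω = h (M ω, Q ω)) :
    finCondMutualInfo μ θf M Q = finEntropy μ θf - finCondEntropy μ θf S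
      ∧ finCondMutualInfo μ θf M Q = finMutualInfo μ θf S :=
  metamix_information_contribution_general μ θf S Q M hθ hQ hindep hcondindep g h hg hh
end
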